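/- Suppose P ∈ (0,1/2) and Δv = V_max/T for an integer T ≥ 1. Let μ = Σ_{j=1}^{N} f_j · δ_{v_j} be a weak stationary solution of the δ model with 0 = v_1 < v_2 < … < v_N ≤ V_max, f_j > 0 for every j, and Σ_{j=1}^{N} f_j = ρ. Then N = T+1 and v_j = (j−1)·Δv for every j = 1,…,N; that is, the atoms of any such equilibrium are located exactly at the quantized velocities 0, Δv, 2Δv, …, V_max spaced by multiples of the acceleration parameter Δv. -/

import Mathlib

/-!
Write `G(s)` for the mass the atomic measure gives to a set `s` and `H(s)` for the mass of the
accelerated speeds `min (v_i + Δv) Vmax`. Testing the weak equation against (continuous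
interpolants of) the indicator of an upper set `U` gives `(1 - P) G(U)² + P ρ H(U) = ρ G(U)`;
subtracting the cases `U = [x, ∞)` and `U = (x, ∞)` gives a balance at the single point `x`.
An accelerated speed that is not an atom would carry mass `P ρ H({x}) > 0` that nothing
balances, so every accelerated speed is an atom. At an atom `x` receiving no accelerated mass,
`(1 - P) (G[x, ∞) + G(x, ∞)) = ρ`; the left side strictly decreases along the atoms, so this
happens only at the smallest atom `0`. Every other atom is therefore reached from a smaller one
by a step `Δv` or by saturation at `Vmax = T Δv`, and the atoms are exactly `0, Δv, …, T Δv`.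
-/

open MeasureTheory

/-- The δ-model transition kernel: for pre-interaction speeds `vs` (candidate) and
`vf` (field), the probability measure
`A_δ(vs,vf) = (1−P)·δ_{min(vs,vf)} + P·δ_{min(vs+Δv, Vmax)}`. -/
noncomputable def deltaKernel (Vmax Δv P : ℝ) (vs vf : ℝ) : Measure ℝ :=
  ENNReal.ofReal (1 - P) • Measure.dirac (min vs vf)
    + ENNReal.ofReal P • Measure.dirac (min (vs + Δv) Vmax)

/-- `μ` is a weak stationary solution of the δ model: for every continuous test
function `φ`, `∫∫ (∫ φ dA_δ(v_*,v^*)) dμ(v_*) dμ(v^*) = ρ ∫ φ dμ`. -/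
def IsWeakStationaryDelta (Vmax Δv ρ P : ℝ) (μ : Measure ℝ) : Prop :=
  ∀ φ : ℝ → ℝ, Continuous φ →
    (∫ vf, ∫ vs, (∫ v, φ v ∂(deltaKernel Vmax Δv P vs vf)) ∂μ ∂μ) = ρ * ∫ v, φ v ∂μ

lemma integral_sum_smul_dirac {α ι : Type*} [MeasurableSpace α] [MeasurableSingletonClass α]
    [Fintype ι] {f : ι → ℝ} (hf : ∀ i, 0 ≤ f i) (u : ι → α) (g : α → ℝ) :
    ∫ x, g x ∂(∑ i, ENNReal.ofReal (f i) • Measure.dirac (u i)) = ∑ i, f i * g (u i) := by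
  rw [integral_finsetSum_measure fun i _ =>
    (integrable_dirac enorm_lt_top).smul_measure ENNReal.ofReal_ne_top]
  refine Finset.sum_congr rfl fun i _ => ?_
  rw [integral_smul_measure, integral_dirac, ENNReal.toReal_ofReal (hf i), smul_eq_mul]

lemma integral_deltaKernel {Vmax Δv P : ℝ} (hP0 : 0 ≤ P) (hP1 : P ≤ 1) (vs vf : ℝ)
    (g : ℝ → ℝ) :
    ∫ x, g x ∂(deltaKernel Vmax Δv P vs vf)
      = (1 - P) * g (min vs vf) + P * g (min (vs + Δv) Vmax) := by
  rw [deltaKernel, integral_add_measure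
      ((integrable_dirac enorm_lt_top).smul_measure ENNReal.ofReal_ne_top)
      ((integrable_dirac enorm_lt_top).smul_measure ENNReal.ofReal_ne_top),
    integral_smul_measure, integral_smul_measure, integral_dirac, integral_dirac,
    ENNReal.toReal_ofReal hP0, ENNReal.toReal_ofReal (sub_nonneg.2 hP1), smul_eq_mul, smul_eq_mul]

lemma exists_continuous_eqOn_finset {𝕜 : Type*} [Field 𝕜] [TopologicalSpace 𝕜]
    [IsTopologicalSemiring 𝕜] (S : Finset 𝕜) (ψ : 𝕜 → 𝕜) :
    ∃ φ : 𝕜 → 𝕜, Continuous φ ∧ Set.EqOn φ ψ S := by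
  classical
  exact ⟨fun x => (Lagrange.interpolate S id ψ).eval x, Polynomial.continuous _,
    fun x hx => Lagrange.eval_interpolate_at_node ψ (Set.injOn_id _) hx⟩

theorem IsWeakStationaryDelta.atomic_balance {ι : Type*} [Fintype ι] {Vmax Δv ρ P : ℝ}
    {v f : ι → ℝ} (hP0 : 0 ≤ P) (hP1 : P ≤ 1) (hf : ∀ i, 0 ≤ f i) (hmass : ∑ i, f i = ρ)
    (hstat : IsWeakStationaryDelta Vmax Δv ρ P
      (∑ i, ENNReal.ofReal (f i) • Measure.dirac (v i))) (ψ : ℝ → ℝ) :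
    (1 - P) * ∑ j, f j * ∑ i, f i * ψ (min (v i) (v j))
      + P * ρ * ∑ i, f i * ψ (min (v i + Δv) Vmax) = ρ * ∑ j, f j * ψ (v j) := by
  classical
  -- only finitely many values of `ψ` enter, so a continuous interpolant can stand in for it
  obtain ⟨φ, hφ, hφψ⟩ := exists_continuous_eqOn_finset
    (Finset.univ.image v ∪ Finset.univ.image fun i => min (v i + Δv) Vmax) ψ
  have hv (i) : φ (v i) = ψ (v i) := hφψ (by simp)
  have hw (i) : φ (min (v i + Δv) Vmax) = ψ (min (v i + Δv) Vmax) := hφψ (by simp)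
  have hmin (i j) : φ (min (v i) (v j)) = ψ (min (v i) (v j)) := by
    rcases min_choice (v i) (v j) with h | h <;> rw [h, hv]
  have h := hstat φ hφ
  simp only [integral_deltaKernel hP0 hP1, integral_sum_smul_dirac hf, hv, hw, hmin] at h
  have split (j) : f j * ∑ i, f i * ((1 - P) * ψ (min (v i) (v j)) + P * ψ (min (v i + Δv) Vmax))
      = (1 - P) * (f j * ∑ i, f i * ψ (min (v i) (v j)))
        + P * f j * ∑ i, f i * ψ (min (v i + Δv) Vmax) := by
    simp only [mul_add, Finset.sum_add_distrib, Finset.mul_sum]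
    congr 1 <;> exact Finset.sum_congr rfl fun _ _ => by ring
  rw [← h, Finset.sum_congr rfl fun j _ => split j, Finset.sum_add_distrib, ← Finset.mul_sum,
    ← Finset.sum_mul, ← Finset.mul_sum, hmass]

lemma indicator_min_of_isUpperSet {α M : Type*} [LinearOrder α] [MulZeroOneClass M]
    {U : Set α} (hU : IsUpperSet U) (a b : α) :
    U.indicator (1 : α → M) (min a b) = U.indicator 1 a * U.indicator 1 b := by
  have hmin : min a b ∈ U ↔ a ∈ U ∧ b ∈ U :=
    ⟨fun h => ⟨hU (min_le_left a b) h, hU (min_le_right a b) h⟩,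
      fun ⟨ha, hb⟩ => by rcases min_choice a b with h | h <;> rwa [h]⟩
  by_cases ha : a ∈ U <;> by_cases hb : b ∈ U <;> simp [hmin, ha, hb]

/-- The mass `μ s` of the atomic measure `μ = ∑ i, f i • δ_{u i}`. -/
noncomputable def atomicMass {ι : Type*} [Fintype ι] (f u : ι → ℝ) (s : Set ℝ) : ℝ :=
  ∑ i, f i * s.indicator 1 (u i)

section atomicMass

variable {ι : Type*} [Fintype ι] {f u : ι → ℝ}

lemma atomicMass_Ici (x : ℝ) :
    atomicMass f u (Set.Ici x) = atomicMass f u (Set.Ioi x) + atomicMass f u {x} := by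
  simp only [atomicMass, ← Finset.sum_add_distrib, ← mul_add]
  refine Finset.sum_congr rfl fun i _ => ?_
  rcases lt_trichotomy (u i) x with h | rfl | h
  · simp [h.not_ge, h.not_gt, h.ne]
  · simp
  · simp [h.le, h, h.ne']

lemma atomicMass_singleton_of_forall_ne {x : ℝ} (h : ∀ i, u i ≠ x) :
    atomicMass f u {x} = 0 := by
  simp [atomicMass, h]

lemma le_atomicMass_singleton (hf : ∀ i, 0 ≤ f i) (k : ι) : f k ≤ atomicMass f u {u k} :=
  calc f k = f k * ({u k} : Set ℝ).indicator 1 (u k) := by simp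
    _ ≤ atomicMass f u {u k} := Finset.single_le_sum
      (fun i _ => mul_nonneg (hf i) (Set.indicator_nonneg (by simp) _)) (Finset.mem_univ k)

lemma atomicMass_mono (hf : ∀ i, 0 ≤ f i) {s t : Set ℝ} (hst : s ⊆ t) :
    atomicMass f u s ≤ atomicMass f u t :=
  Finset.sum_le_sum fun i _ => mul_le_mul_of_nonneg_left
    (Set.indicator_le_indicator_of_subset hst (by simp) _) (hf i)

end atomicMass

namespace IsWeakStationaryDelta

variable {ι : Type*} [Fintype ι] {Vmax Δv ρ P : ℝ} {v f : ι → ℝ}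

theorem atomicMass_upperSet_balance (hP0 : 0 ≤ P) (hP1 : P ≤ 1) (hf : ∀ i, 0 ≤ f i)
    (hmass : ∑ i, f i = ρ)
    (hstat : IsWeakStationaryDelta Vmax Δv ρ P
      (∑ i, ENNReal.ofReal (f i) • Measure.dirac (v i))) {U : Set ℝ} (hU : IsUpperSet U) :
    (1 - P) * atomicMass f v U ^ 2 + P * ρ * atomicMass f (fun i => min (v i + Δv) Vmax) U
      = ρ * atomicMass f v U := by
  have h := hstat.atomic_balance hP0 hP1 hf hmass (U.indicator 1)
  have hmin (i j : ι) : U.indicator (1 : ℝ → ℝ) (min (v i) (v j))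
      = U.indicator 1 (v i) * U.indicator 1 (v j) := indicator_min_of_isUpperSet hU _ _
  have hsq : atomicMass f v U ^ 2
      = ∑ j, f j * ∑ i, f i * (U.indicator 1 (v i) * U.indicator 1 (v j)) := by
    rw [sq, atomicMass, Finset.sum_mul_sum]
    refine Finset.sum_congr rfl fun _ _ => ?_
    rw [Finset.mul_sum]
    exact Finset.sum_congr rfl fun _ _ => by ring
  simp only [hmin] at h
  rw [hsq]
  exact h

theorem atomicMass_singleton_balance (hP0 : 0 ≤ P) (hP1 : P ≤ 1) (hf : ∀ i, 0 ≤ f i)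
    (hmass : ∑ i, f i = ρ)
    (hstat : IsWeakStationaryDelta Vmax Δv ρ P
      (∑ i, ENNReal.ofReal (f i) • Measure.dirac (v i))) (x : ℝ) :
    (1 - P) * (atomicMass f v (Set.Ici x) + atomicMass f v (Set.Ioi x)) * atomicMass f v {x}
      + P * ρ * atomicMass f (fun i => min (v i + Δv) Vmax) {x} = ρ * atomicMass f v {x} := by
  have hIci := hstat.atomicMass_upperSet_balance hP0 hP1 hf hmass (isUpperSet_Ici x)
  have hIoi := hstat.atomicMass_upperSet_balance hP0 hP1 hf hmass (isUpperSet_Ioi x)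
  simp only [atomicMass_Ici] at hIci ⊢
  linear_combination hIci - hIoi

theorem exists_eq_min_add (hP0 : 0 < P) (hP1 : P ≤ 1) (hf : ∀ i, 0 < f i)
    (hmass : ∑ i, f i = ρ)
    (hstat : IsWeakStationaryDelta Vmax Δv ρ P
      (∑ i, ENNReal.ofReal (f i) • Measure.dirac (v i))) (i : ι) :
    ∃ k, v k = min (v i + Δv) Vmax := by
  by_contra! hne
  have hρ : 0 < ρ :=
    hmass ▸ (hf i).trans_le (Finset.single_le_sum (fun j _ => (hf j).le) (Finset.mem_univ i))
  have h := hstat.atomicMass_singleton_balance hP0.le hP1 (fun j => (hf j).le) hmass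
    (min (v i + Δv) Vmax)
  rw [atomicMass_singleton_of_forall_ne hne, mul_zero, mul_zero, zero_add] at h
  have hinflow : 0 < atomicMass f (fun j => min (v j + Δv) Vmax) {min (v i + Δv) Vmax} :=
    (hf i).trans_le (le_atomicMass_singleton (fun j => (hf j).le) i)
  have := mul_pos (mul_pos hP0 hρ) hinflow
  linarith

theorem one_sub_mul_atomicMass_Ici_add_Ioi (hP0 : 0 ≤ P) (hP1 : P ≤ 1) (hf : ∀ i, 0 < f i)
    (hmass : ∑ i, f i = ρ)
    (hstat : IsWeakStationaryDelta Vmax Δv ρ P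
      (∑ i, ENNReal.ofReal (f i) • Measure.dirac (v i)))
    {k : ι} (hk : ∀ i, min (v i + Δv) Vmax ≠ v k) :
    (1 - P) * (atomicMass f v (Set.Ici (v k)) + atomicMass f v (Set.Ioi (v k))) = ρ := by
  have h := hstat.atomicMass_singleton_balance hP0 hP1 (fun j => (hf j).le) hmass (v k)
  rw [atomicMass_singleton_of_forall_ne hk, mul_zero, add_zero] at h
  exact mul_right_cancel₀ ((hf k).trans_le (le_atomicMass_singleton (fun j => (hf j).le) k)).ne' h

theorem exists_min_add_eq (hP0 : 0 ≤ P) (hP1 : P < 1) (hf : ∀ i, 0 < f i)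
    (hmass : ∑ i, f i = ρ)
    (hstat : IsWeakStationaryDelta Vmax Δv ρ P
      (∑ i, ENNReal.ofReal (f i) • Measure.dirac (v i)))
    {k l : ι} (hkl : v k < v l) (hk : ∀ i, min (v i + Δv) Vmax ≠ v k) :
    ∃ i, min (v i + Δv) Vmax = v l := by
  by_contra! hl
  have hf0 (i) : 0 ≤ f i := (hf i).le
  have hbal_k := hstat.one_sub_mul_atomicMass_Ici_add_Ioi hP0 hP1.le hf hmass hk
  have hbal_l := hstat.one_sub_mul_atomicMass_Ici_add_Ioi hP0 hP1.le hf hmass hl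
  have hIci_l := atomicMass_mono (u := v) hf0 (Set.Ici_subset_Ioi.2 hkl)
  have hsplit_k := atomicMass_Ici (f := f) (u := v) (v k)
  have hsplit_l := atomicMass_Ici (f := f) (u := v) (v l)
  have hatom_k := le_atomicMass_singleton (u := v) hf0 k
  have hatom_l := le_atomicMass_singleton (u := v) hf0 l
  have hlt : atomicMass f v (Set.Ici (v l)) + atomicMass f v (Set.Ioi (v l))
      < atomicMass f v (Set.Ici (v k)) + atomicMass f v (Set.Ioi (v k)) := by
    linarith [hf k, hf l]
  linarith [mul_lt_mul_of_pos_left hlt (sub_pos.2 hP1)]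

end IsWeakStationaryDelta

def quantizedSpeeds (Δv : ℝ) (T : ℕ) : Set ℝ :=
  Set.range fun m : Fin (T + 1) => (m : ℝ) * Δv

lemma range_subset_quantizedSpeeds {ι : Type*} [LinearOrder ι] [WellFoundedLT ι] {v : ι → ℝ}
    (hv : StrictMono v) {Δv Vmax : ℝ} {T : ℕ} (hΔ : 0 < Δv) (hTΔ : T * Δv = Vmax)
    (hinflow : ∀ k, v k ≠ 0 → ∃ i, min (v i + Δv) Vmax = v k) :
    Set.range v ⊆ quantizedSpeeds Δv T := by
  rintro _ ⟨k, rfl⟩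
  induction k using WellFoundedLT.induction with
  | ind k ih =>
  by_cases hk0 : v k = 0
  · exact ⟨0, by simp [hk0]⟩
  obtain ⟨i, hi⟩ := hinflow k hk0
  rcases le_total (v i + Δv) Vmax with h | h
  · rw [min_eq_left h] at hi
    obtain ⟨m, hm⟩ := ih i (hv.lt_iff_lt.1 (by linarith))
    have hmT : (m : ℕ) + 1 ≤ T := by
      have : ((m : ℕ) + 1 : ℝ) * Δv ≤ T * Δv := by linarith
      exact_mod_cast le_of_mul_le_mul_right this hΔ
    exact ⟨⟨m + 1, by omega⟩, by push_cast; linarith⟩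
  · rw [min_eq_right h] at hi
    exact ⟨Fin.last T, by simp [hTΔ, hi]⟩

lemma quantizedSpeeds_subset_range {ι : Type*} {v : ι → ℝ} {Δv Vmax : ℝ} {T : ℕ}
    (hΔ : 0 ≤ Δv) (hTΔ : T * Δv = Vmax) (h0 : ∃ k, v k = 0)
    (houtflow : ∀ i, ∃ k, v k = min (v i + Δv) Vmax) :
    quantizedSpeeds Δv T ⊆ Set.range v := by
  rintro _ ⟨m, rfl⟩
  induction m using Fin.induction with
  | zero => simpa using h0
  | succ m ih =>
    obtain ⟨i, hi⟩ := ih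
    obtain ⟨k, hk⟩ := houtflow i
    have hmT : ((m : ℕ) + 1 : ℝ) ≤ T := by exact_mod_cast m.is_lt
    refine ⟨k, ?_⟩
    simp only [Fin.val_castSucc] at hi
    have hstep : (m : ℝ) * Δv + Δv ≤ Vmax := by rw [← hTΔ]; nlinarith
    simp only [hk, hi, Fin.val_succ, min_eq_left hstep]
    push_cast
    ring

theorem StrictMono.eq_of_range_eq_range_fin {α : Type*} [Preorder α] {N M : ℕ}
    {v : Fin N → α} {u : ℕ → α} (hv : StrictMono v) (hu : StrictMono u)
    (h : Set.range v = Set.range fun m : Fin M => u m) : N = M ∧ ∀ k : Fin N, v k = u k := by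
  have hNM : N = M := by
    have hcard := Nat.card_range_of_injective hv.injective
    rw [h, Nat.card_range_of_injective (f := fun m : Fin M => u m)
      (hu.comp Fin.val_strictMono).injective] at hcard
    simpa using hcard.symm
  subst hNM
  exact ⟨rfl, congrFun ((hv.range_inj (hu.comp Fin.val_strictMono)).1 h)⟩

theorem statement3_general (Vmax Δv ρ P : ℝ) (T : ℕ) (hT : 1 ≤ T)
    (hV : 0 < Vmax) (hP0 : 0 < P) (hP : P < 1 / 2)
    (hΔv : Δv = Vmax / (T : ℝ))
    (N : ℕ) (hN : 0 < N) (v f : Fin N → ℝ)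
    (hv0 : v ⟨0, hN⟩ = 0) (hmono : StrictMono v)
    (hf : ∀ j, 0 < f j) (hmass : ∑ j, f j = ρ)
    (hstat : IsWeakStationaryDelta Vmax Δv ρ P
      (∑ j, ENNReal.ofReal (f j) • Measure.dirac (v j))) :
    N = T + 1 ∧ ∀ j : Fin N, v j = (j : ℕ) * Δv := by
  have hΔ : 0 < Δv := by rw [hΔv]; positivity
  have hTΔ : (T : ℝ) * Δv = Vmax := by rw [hΔv]; field_simp
  have hP1 : P < 1 := by linarith
  have hv_nonneg (k : Fin N) : 0 ≤ v k := hv0 ▸ hmono.monotone (Nat.zero_le k.val)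
  have hinflow (k : Fin N) (hk : v k ≠ 0) : ∃ i, min (v i + Δv) Vmax = v k := by
    have hlt : v ⟨0, hN⟩ < v k := by rw [hv0]; exact (hv_nonneg k).lt_of_ne' hk
    have hnone (i : Fin N) : min (v i + Δv) Vmax ≠ v ⟨0, hN⟩ := by
      rw [hv0]; exact (lt_min (by linarith [hv_nonneg i]) hV).ne'
    exact hstat.exists_min_add_eq hP0.le hP1 hf hmass hlt hnone
  have hrange : Set.range v = quantizedSpeeds Δv T :=
    (range_subset_quantizedSpeeds hmono hΔ hTΔ hinflow).antisymm
      (quantizedSpeeds_subset_range hΔ.le hTΔ ⟨_, hv0⟩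
        (hstat.exists_eq_min_add hP0 hP1.le hf hmass))
  exact hmono.eq_of_range_eq_range_fin (u := fun m : ℕ => (m : ℝ) * Δv)
    (fun a b hab => by dsimp only; gcongr) hrange

/-- Suppose `P ∈ (0,1/2)` and `Δv = Vmax/T` with `T ≥ 1` an integer.  If
`μ = Σ_{j} f_j δ_{v_j}` is a weak stationary solution of the δ model with
`0 = v_1 < v_2 < ⋯ < v_N ≤ Vmax`, `f_j > 0` for every `j` and `Σ_j f_j = ρ`,
then `N = T+1` and `v_j = (j−1)·Δv` for every `j`: the atoms are located exactly
at the quantized velocities `0, Δv, 2Δv, …, Vmax`. -/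
theorem statement3 (Vmax Δv ρ P : ℝ) (T : ℕ) (hT : 1 ≤ T)
    (hV : 0 < Vmax) (hρ : 0 < ρ) (hP0 : 0 < P) (hP : P < 1 / 2)
    (hΔv : Δv = Vmax / (T : ℝ))
    (N : ℕ) (hN : 0 < N) (v f : Fin N → ℝ)
    (hv0 : v ⟨0, hN⟩ = 0) (hmono : StrictMono v) (hvle : ∀ j, v j ≤ Vmax)
    (hf : ∀ j, 0 < f j) (hmass : ∑ j, f j = ρ)
    (hstat : IsWeakStationaryDelta Vmax Δv ρ P
      (∑ j, ENNReal.ofReal (f j) • Measure.dirac (v j))) :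
    N = T + 1 ∧ ∀ j : Fin N, v j = (j : ℕ) * Δv :=
  statement3_general Vmax Δv ρ P T hT hV hP0 hP hΔv N hN v f hv0 hmono hf hmass hstat
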